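/- Let k ≥ 1, let C ⊆ ℝ^k be a nonempty open convex set, let f : C → ℝ^k be a continuous injection with convex image, and fix m ≥ 2 positive real weights α₁,…,α_m with sum 1. Let T = {t₁,…,t_h} ⊆ C with 2 ≤ h, and let Δ := { δ ∈ [0,1]^h : δ₁+⋯+δ_h = 1 } be the (h−1)-dimensional simplex. Then the set W := { γ ∈ Δ : f⁻¹(γ₁ f(t₁)+⋯+γ_h f(t_h)) ∈ 𝓜^ω(T) } is dense in Δ. -/

import Mathlib

open Set

/-- The quasi-arithmetic mean set `𝓜(S)` of `S` with respect to `f : C → ℝᵏ`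
(injective with convex image) and weights `α₁,…,α_m`:
`𝓜(S) = { f⁻¹(α₁ f(x₁) + ⋯ + α_m f(x_m)) : x₁,…,x_m ∈ S }`,
encoded as the set of `y ∈ C` with `f y = α₁ f(x₁) + ⋯ + α_m f(x_m)`. -/
def meanSet {k m : ℕ} (f : (Fin k → ℝ) → (Fin k → ℝ)) (C : Set (Fin k → ℝ))
    (α : Fin m → ℝ) (S : Set (Fin k → ℝ)) : Set (Fin k → ℝ) :=
  {y | y ∈ C ∧ ∃ x : Fin m → (Fin k → ℝ), (∀ i, x i ∈ S) ∧ f y = ∑ i, α i • f (x i)}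

/-- Iterates: `𝓜⁰(S) = S`, `𝓜ⁿ⁺¹(S) = 𝓜(𝓜ⁿ(S))`. -/
def meanIter {k m : ℕ} (f : (Fin k → ℝ) → (Fin k → ℝ)) (C : Set (Fin k → ℝ))
    (α : Fin m → ℝ) (S : Set (Fin k → ℝ)) : ℕ → Set (Fin k → ℝ)
  | 0 => S
  | n + 1 => meanSet f C α (meanIter f C α S n)

/-- `𝓜^ω(S) = ⋃ₙ 𝓜ⁿ(S)`. -/
def meanOmega {k m : ℕ} (f : (Fin k → ℝ) → (Fin k → ℝ)) (C : Set (Fin k → ℝ))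
    (α : Fin m → ℝ) (S : Set (Fin k → ℝ)) : Set (Fin k → ℝ) :=
  ⋃ n, meanIter f C α S n

open Set

lemma key_interval {s : ℝ} (hs0 : 1/2 ≤ s) (hs1 : s < 1)
    {Λ : Set ℝ} (hcl : IsClosed Λ) (h0 : (0:ℝ) ∈ Λ) (h1 : (1:ℝ) ∈ Λ)
    (hst : ∀ a ∈ Λ, ∀ b ∈ Λ, s*a + (1-s)*b ∈ Λ) :
    Icc (0:ℝ) 1 ⊆ Λ := by
  have hspos : 0 < s := lt_of_lt_of_le (by norm_num) hs0
  have key : ∀ n : ℕ, ∀ p ∈ Icc (0:ℝ) 1, ∃ q ∈ Λ, |p - q| ≤ s ^ n := by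
    intro n
    induction n with
    | zero =>
      intro p hp
      exact ⟨0, h0, by simpa using abs_le.2 ⟨by linarith [hp.1], by linarith [hp.2]⟩⟩
    | succ n ih =>
      intro p hp
      rcases le_or_gt p s with hps | hps
      · obtain ⟨q, hq, hq2⟩ := ih (p / s) ⟨div_nonneg hp.1 hspos.le, by
          rw [div_le_one hspos]; exact hps⟩
        refine ⟨s * q + (1 - s) * 0, hst q hq 0 h0, ?_⟩
        have : |p - (s * q + (1 - s) * 0)| = s * |p / s - q| := by
          have he : p - (s * q + (1 - s) * 0) = s * (p / s - q) := by
            field_simp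
            ring
          rw [he, abs_mul, abs_of_pos hspos]
        rw [this, pow_succ, mul_comm (s ^ n) s]
        exact mul_le_mul_of_nonneg_left hq2 hspos.le
      · obtain ⟨q, hq, hq2⟩ := ih ((p - (1 - s)) / s) ⟨by
          have : 1 - s ≤ s := by linarith
          have : 1 - s ≤ p := le_trans (by linarith) hps.le
          exact div_nonneg (by linarith) hspos.le, by
          rw [div_le_one hspos]; linarith [hp.2]⟩
        refine ⟨s * q + (1 - s) * 1, hst q hq 1 h1, ?_⟩
        have : |p - (s * q + (1 - s) * 1)| = s * |(p - (1 - s)) / s - q| := by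
          have he : p - (s * q + (1 - s) * 1) = s * ((p - (1 - s)) / s - q) := by
            field_simp
            ring
          rw [he, abs_mul, abs_of_pos hspos]
        rw [this, pow_succ, mul_comm (s ^ n) s]
        exact mul_le_mul_of_nonneg_left hq2 hspos.le
  intro p hp
  rw [← hcl.closure_eq]
  rw [Metric.mem_closure_iff]
  intro ε hε
  obtain ⟨n, hn⟩ := exists_pow_lt_of_lt_one hε hs1
  obtain ⟨q, hq, hq2⟩ := key n p hp
  exact ⟨q, hq, by rw [Real.dist_eq]; exact lt_of_le_of_lt hq2 hn⟩

lemma closed_stable_convex {h : ℕ} {τ : ℝ} (ht0 : 0 < τ) (ht1 : τ < 1)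
    {D : Set (Fin h → ℝ)} (hcl : IsClosed D)
    (hst : ∀ x ∈ D, ∀ y ∈ D, τ • x + (1-τ) • y ∈ D) : Convex ℝ D := by
  intro x hx y hy a b ha hb hab
  have hb' : b = 1 - a := by linarith
  subst hb'
  set Λ : Set ℝ := {l : ℝ | l • x + (1 - l) • y ∈ D} with hΛ
  have hΛcl : IsClosed Λ := by
    have : Continuous fun l : ℝ => l • x + (1 - l) • y := by continuity
    exact hcl.preimage this
  have h0 : (0:ℝ) ∈ Λ := by simp [hΛ, hy]
  have h1 : (1:ℝ) ∈ Λ := by simp [hΛ, hx]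
  have hcomb : ∀ p ∈ Λ, ∀ q ∈ Λ, τ * p + (1 - τ) * q ∈ Λ := by
    intro p hp q hq
    have := hst _ hp _ hq
    have heq : τ • (p • x + (1 - p) • y) + (1 - τ) • (q • x + (1 - q) • y)
        = (τ * p + (1 - τ) * q) • x + (1 - (τ * p + (1 - τ) * q)) • y := by
      module
    rw [heq] at this
    exact this
  have hs : Icc (0:ℝ) 1 ⊆ Λ := by
    rcases le_total (1/2 : ℝ) τ with hc | hc
    · exact key_interval hc ht1 hΛcl h0 h1 hcomb
    · refine key_interval (by linarith : 1/2 ≤ 1 - τ) (by linarith) hΛcl h0 h1 ?_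
      intro p hp q hq
      have := hcomb q hq p hp
      have heq : τ * q + (1 - τ) * p = (1 - τ) * p + (1 - (1 - τ)) * q := by ring
      rwa [heq] at this
  exact hs ⟨ha, by linarith⟩


set_option maxHeartbeats 1000000 in
/-- Claim in the proof of (ii) ⟹ (i): for `T = {t₁,…,t_h} ⊆ C` with `h ≥ 2`, the set
`W = { γ ∈ Δ : f⁻¹(γ₁ f(t₁) + ⋯ + γ_h f(t_h)) ∈ 𝓜^ω(T) }` is dense in the simplex
`Δ = { δ ∈ [0,1]^h : δ₁ + ⋯ + δ_h = 1 }` (density in the relative topology of `Δ`,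
i.e. `Δ ⊆ closure W` since `W ⊆ Δ`). -/
theorem stmt14 {k m h : ℕ} (hk : 1 ≤ k) (hm : 2 ≤ m) (hh : 2 ≤ h)
    (C : Set (Fin k → ℝ)) (hCne : C.Nonempty) (hCopen : IsOpen C) (hCconv : Convex ℝ C)
    (f : (Fin k → ℝ) → (Fin k → ℝ)) (hfc : ContinuousOn f C) (hfi : Set.InjOn f C)
    (hfim : Convex ℝ (f '' C))
    (α : Fin m → ℝ) (hα : ∀ i, 0 < α i) (hα1 : ∑ i, α i = 1)
    (t : Fin h → (Fin k → ℝ)) (ht : ∀ i, t i ∈ C) :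
    {δ : Fin h → ℝ | (∀ i, δ i ∈ Set.Icc (0 : ℝ) 1) ∧ ∑ i, δ i = 1} ⊆
      closure {γ : Fin h → ℝ | ((∀ i, γ i ∈ Set.Icc (0 : ℝ) 1) ∧ ∑ i, γ i = 1) ∧
        ∃ y ∈ meanOmega f C α (Set.range t), f y = ∑ i, γ i • f (t i)} := by
  set Γ : Set (Fin h → ℝ) := {γ : Fin h → ℝ | ((∀ i, γ i ∈ Set.Icc (0 : ℝ) 1) ∧ ∑ i, γ i = 1) ∧
        ∃ y ∈ meanOmega f C α (Set.range t), f y = ∑ i, γ i • f (t i)} with hΓ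
  -- iterates stay in C
  have hsubC : ∀ n, meanIter f C α (Set.range t) n ⊆ C := by
    intro n
    induction n with
    | zero => rintro x ⟨i, rfl⟩; exact ht i
    | succ n ih => exact fun y hy => hy.1
  have hmono : ∀ n, meanIter f C α (Set.range t) n ⊆ meanIter f C α (Set.range t) (n+1) := by
    intro n x hx
    refine ⟨hsubC n hx, fun _ => x, fun i => hx, ?_⟩
    rw [← Finset.sum_smul, hα1, one_smul]
  have hmono' : Monotone (meanIter f C α (Set.range t)) := monotone_nat_of_le_succ hmono
  -- vertices
  set e : Fin h → (Fin h → ℝ) := fun j i => if i = j then 1 else 0 with he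
  have hvert : ∀ j, e j ∈ Γ := by
    intro j
    refine ⟨⟨fun i => ?_, ?_⟩, t j, mem_iUnion.2 ⟨0, ⟨j, rfl⟩⟩, ?_⟩
    · simp only [he]
      split <;> simp
    · simp [he]
    · simp [he, ite_smul]
  -- stability of Γ under the mean operation on weights
  have hstab : ∀ g : Fin m → (Fin h → ℝ), (∀ l, g l ∈ Γ) → (∑ l, α l • g l) ∈ Γ := by
    intro g hg
    choose y hyΩ hfy using fun l => (hg l).2
    choose n hn using fun l => mem_iUnion.mp (hyΩ l)
    set N := Finset.univ.sup n with hN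
    have hyN : ∀ l, y l ∈ meanIter f C α (Set.range t) N :=
      fun l => hmono' (Finset.le_sup (Finset.mem_univ l)) (hn l)
    have hmem : (∑ l, α l • f (y l)) ∈ f '' C :=
      hfim.sum_mem (fun l _ => (hα l).le) hα1
        (fun l _ => mem_image_of_mem f (hsubC N (hyN l)))
    obtain ⟨z, hzC, hz⟩ := hmem
    have hcoord : ∀ i, (∑ l, α l • g l) i = ∑ l, α l * g l i := by
      intro i; simp [Finset.sum_apply]
    refine ⟨⟨fun i => ?_, ?_⟩, z, mem_iUnion.2 ⟨N + 1, ⟨hzC, y, hyN, hz⟩⟩, ?_⟩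
    · rw [hcoord i]
      constructor
      · exact Finset.sum_nonneg fun l _ =>
          mul_nonneg (hα l).le ((hg l).1.1 i).1
      · calc ∑ l, α l * g l i ≤ ∑ l, α l * 1 :=
              Finset.sum_le_sum fun l _ =>
                mul_le_mul_of_nonneg_left ((hg l).1.1 i).2 (hα l).le
          _ = 1 := by simp [hα1]
    · rw [Finset.sum_congr rfl fun i _ => hcoord i, Finset.sum_comm]
      calc ∑ l, ∑ i, α l * g l i = ∑ l, α l * ∑ i, g l i := by
            simp [Finset.mul_sum]
        _ = ∑ l, α l := by
            refine Finset.sum_congr rfl fun l _ => by rw [(hg l).1.2, mul_one]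
        _ = 1 := hα1
    · rw [hz]
      calc ∑ l, α l • f (y l) = ∑ l, α l • ∑ i, g l i • f (t i) := by
            refine Finset.sum_congr rfl fun l _ => by rw [hfy l]
        _ = ∑ l, ∑ i, (α l * g l i) • f (t i) := by
            refine Finset.sum_congr rfl fun l _ => by
              rw [Finset.smul_sum]
              exact Finset.sum_congr rfl fun i _ => by rw [mul_smul]
        _ = ∑ i, ∑ l, (α l * g l i) • f (t i) := Finset.sum_comm
        _ = ∑ i, (∑ l, α l • g l) i • f (t i) := by
            refine Finset.sum_congr rfl fun i _ => by
              rw [hcoord i, ← Finset.sum_smul]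
  -- closure is convex
  set D := closure Γ with hD
  set i0 : Fin m := ⟨0, by omega⟩ with hi0
  set i1 : Fin m := ⟨1, by omega⟩ with hi1
  have hi01 : i0 ≠ i1 := by simp [hi0, hi1, Fin.ext_iff]
  have hτ1 : α i0 < 1 := by
    have h2 : α i0 + α i1 ≤ 1 := by
      rw [← hα1]
      have := Finset.sum_le_sum_of_subset_of_nonneg
        (Finset.subset_univ {i0, i1}) (fun l _ _ => (hα l).le)
      rwa [Finset.sum_pair hi01] at this
    linarith [hα i1]
  have hbin : ∀ x ∈ Γ, ∀ y ∈ Γ, α i0 • x + (1 - α i0) • y ∈ Γ := by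
    intro x hx y hy
    have := hstab (fun l => if l = i0 then x else y) (fun l => by
      by_cases hc : l = i0 <;> simp [hc, hx, hy])
    have heq : (∑ l, α l • (if l = i0 then x else y))
        = α i0 • x + (1 - α i0) • y := by
      rw [← Finset.add_sum_erase _ _ (Finset.mem_univ i0)]
      simp only [if_pos rfl]
      congr 1
      have hsum : ∑ l ∈ Finset.univ.erase i0, α l = 1 - α i0 := by
        rw [Finset.sum_erase_eq_sub (Finset.mem_univ i0), hα1]
      rw [← hsum, Finset.sum_smul]
      refine Finset.sum_congr rfl fun l hl => ?_
      rw [if_neg (Finset.ne_of_mem_erase hl)]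
    rwa [heq] at this
  have hDstab : ∀ x ∈ D, ∀ y ∈ D, α i0 • x + (1 - α i0) • y ∈ D := by
    intro x hx y hy
    have hcont : Continuous (fun p : (Fin h → ℝ) × (Fin h → ℝ) =>
        α i0 • p.1 + (1 - α i0) • p.2) :=
      by fun_prop
    exact map_mem_closure₂ (f := fun x y => α i0 • x + (1 - α i0) • y) hcont hx hy hbin
  have hDconv : Convex ℝ D := closed_stable_convex (hα i0) hτ1 isClosed_closure hDstab
  -- conclude
  rintro δ ⟨hδmem, hδsum⟩
  have hsum : (∑ j, δ j • e j) ∈ D :=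
    hDconv.sum_mem (fun j _ => (hδmem j).1) hδsum
      (fun j _ => subset_closure (hvert j))
  have : (∑ j, δ j • e j) = δ := by
    funext i
    simp only [Finset.sum_apply, Pi.smul_apply, he, smul_eq_mul, mul_ite, mul_one, mul_zero]
    simp
  rwa [this] at hsum
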